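/- Let D be a GCD domain with fraction field K and let A ∈ D^{n×n} admit a permutation-free LD⁻¹U decomposition A = L · D_g^{−1} · U. Then for every k with 1 ≤ k ≤ n, the k-th determinantal divisor d_k* of A divides every entry of the k-th row of U, and d_k* divides every entry of the k-th column of L. -/

import Mathlib

/-!
Rows `0, …, k` of `L · D_g⁻¹ · U` only see the leading `(k+1) × (k+1)` blocks of the
lower triangular factors `L` and `D_g⁻¹`. Hence the minor of `A` on rows `0, …, k` and columns
`0, …, k-1, j` is `(p₀⋯p_k) · (p₀⋯p_{k-1} · p₀⋯p_k)⁻¹ · (p₀⋯p_{k-1} · U_{kj}) = U_{kj}`,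
so every common divisor of the `(k+1)`-minors divides `U_{kj}`. Transposing `A = L D_g⁻¹ U` into
`Aᵀ = Uᵀ D_g⁻¹ Lᵀ` gives the statement for the columns of `L`.
-/

/-- The diagonal matrix `D_g = diag(p₁, p₁p₂, p₂p₃, …, p_{n−1}p_n)` built from the
pivots `p : Fin n → D`. -/
def bareissDiag {D : Type*} [CommRing D] {n : ℕ} (p : Fin n → D) :
    Matrix (Fin n) (Fin n) D :=
  Matrix.diagonal fun i =>
    (if (i : ℕ) = 0 then 1
      else p ⟨(i : ℕ) - 1, lt_of_le_of_lt (Nat.sub_le _ _) i.isLt⟩) * p i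

open Matrix Finset

theorem Matrix.submatrix_castLE_mul_of_isLowerTriangular {R α β : Type*}
    [NonUnitalNonAssocSemiring R] {m n : ℕ} (h : m ≤ n) {L : Matrix (Fin n) (Fin n) R}
    (hL : L.IsLowerTriangular)
    (M : Matrix (Fin n) α R) (J : β → α) :
    (L * M).submatrix (Fin.castLE h) J =
      L.submatrix (Fin.castLE h) (Fin.castLE h) * M.submatrix (Fin.castLE h) J := by
  ext i b
  simp only [submatrix_apply, mul_apply]
  calc ∑ s, L (Fin.castLE h i) s * M s (J b)
      = ∑ s ∈ univ.map (Fin.castLEEmb h), L (Fin.castLE h i) s * M s (J b) := by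
        refine (sum_subset (subset_univ _) fun s _ hs => ?_).symm
        have hms : m ≤ (s : ℕ) := by
          by_contra hsm
          exact hs (mem_map.mpr ⟨⟨s, by omega⟩, mem_univ _, rfl⟩)
        have hlt : Fin.castLE h i < s := Fin.lt_def.mpr (by rw [Fin.val_castLE]; omega)
        exact mul_eq_zero_of_left (hL hlt) _
    _ = _ := sum_map _ _ _

def leadingColsThen {n : ℕ} (k j : Fin n) : Fin ((k : ℕ) + 1) → Fin n :=
  Fin.snoc (α := fun _ => Fin n) (Fin.castLE k.is_le') j

theorem strictMono_leadingColsThen {n : ℕ} {k j : Fin n} (hkj : k ≤ j) :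
    StrictMono (leadingColsThen k j) := by
  intro a b hab
  induction b using Fin.lastCases with
  | last =>
    induction a using Fin.lastCases with
    | last => exact absurd hab (lt_irrefl _)
    | cast a =>
      rw [leadingColsThen, Fin.snoc_castSucc, Fin.snoc_last]
      exact (show Fin.castLE _ a < k from a.isLt).trans_le hkj
  | cast b =>
    induction a using Fin.lastCases with
    | last => exact absurd hab (not_lt.mpr (Fin.le_last _))
    | cast a =>
      rw [leadingColsThen, Fin.snoc_castSucc, Fin.snoc_castSucc]
      exact Fin.strictMono_castLE _ (Fin.castSucc_lt_castSucc_iff.mp hab)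

theorem det_submatrix_castLE_leadingColsThen {R : Type*} [CommRing R] {n : ℕ}
    {U : Matrix (Fin n) (Fin n) R} (hU : U.IsUpperTriangular) (k j : Fin n) :
    (U.submatrix (Fin.castLE k.isLt) (leadingColsThen k j)).det =
      (∏ i : Fin k, U (Fin.castLE k.is_le' i) (Fin.castLE k.is_le' i)) * U k j := by
  have hU' : (U.submatrix (Fin.castLE k.isLt) (leadingColsThen k j)).IsUpperTriangular := by
    intro a b hba
    induction b using Fin.lastCases with
    | last => exact absurd hba (not_lt.mpr (Fin.le_last _))
    | cast b =>
      rw [submatrix_apply, leadingColsThen, Fin.snoc_castSucc]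
      exact hU hba
  rw [det_of_isUpperTriangular hU', Fin.prod_univ_castSucc]
  simp only [submatrix_apply, leadingColsThen, Fin.snoc_castSucc, Fin.snoc_last,
    Fin.castLE_castSucc]
  rfl

section BareissDiag

variable {R : Type*} [CommRing R] {n : ℕ}

theorem bareissDiag_map {S : Type*} [CommRing S] (f : R →+* S) (p : Fin n → R) :
    (bareissDiag p).map f = bareissDiag fun i => f (p i) := by
  rw [bareissDiag, bareissDiag, diagonal_map (map_zero f)]
  congr 1
  funext i
  split_ifs <;> simp

theorem bareissDiag_transpose (p : Fin n → R) : (bareissDiag p)ᵀ = bareissDiag p :=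
  diagonal_transpose _

theorem bareissDiag_submatrix_castLE {m : ℕ} (h : m ≤ n) (p : Fin n → R) :
    (bareissDiag p).submatrix (Fin.castLE h) (Fin.castLE h) =
      bareissDiag fun i => p (Fin.castLE h i) := by
  rw [bareissDiag, submatrix_diagonal _ _ (Fin.castLE_injective h)]
  rfl

theorem det_bareissDiag {m : ℕ} (p : Fin (m + 1) → R) :
    (bareissDiag p).det = (∏ i : Fin m, p i.castSucc) * ∏ i, p i := by
  rw [bareissDiag, det_diagonal, Fin.prod_univ_succ, Fin.prod_univ_succ (f := p)]
  simp only [Fin.val_zero, Fin.val_succ, if_true, one_mul, Nat.add_one_ne_zero, if_false,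
    Nat.add_sub_cancel, prod_mul_distrib]
  exact mul_left_comm _ _ _

theorem isUnit_det_bareissDiag {p : Fin n → R} (hp : ∀ i, IsUnit (p i)) :
    IsUnit (bareissDiag p).det := by
  rw [bareissDiag, det_diagonal, IsUnit.prod_univ_iff]
  refine fun i => IsUnit.mul ?_ (hp i)
  split_ifs
  exacts [isUnit_one, hp _]

theorem isLowerTriangular_inv_bareissDiag (p : Fin n → R) :
    (bareissDiag p)⁻¹.IsLowerTriangular := by
  rw [bareissDiag, inv_diagonal]
  exact blockTriangular_diagonal _

theorem transpose_mul_inv_bareissDiag_mul (L U : Matrix (Fin n) (Fin n) R) (p : Fin n → R) :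
    (L * (bareissDiag p)⁻¹ * U)ᵀ = Uᵀ * (bareissDiag p)⁻¹ * Lᵀ := by
  rw [transpose_mul, transpose_mul, transpose_nonsing_inv, bareissDiag_transpose, mul_assoc]

end BareissDiag

theorem det_submatrix_mul_inv_bareissDiag_mul {R : Type*} [CommRing R] {n : ℕ}
    {L U : Matrix (Fin n) (Fin n) R} {p : Fin n → R} (hL : L.IsLowerTriangular)
    (hU : U.IsUpperTriangular) (hLp : ∀ i, L i i = p i) (hUp : ∀ i, U i i = p i)
    (hp : ∀ i, IsUnit (p i)) (k j : Fin n) :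
    ((L * (bareissDiag p)⁻¹ * U).submatrix (Fin.castLE k.isLt) (leadingColsThen k j)).det =
      U k j := by
  set B := bareissDiag p
  set I : Fin ((k : ℕ) + 1) → Fin n := Fin.castLE k.isLt
  have hBinv := isLowerTriangular_inv_bareissDiag p
  have hA : (L * B⁻¹ * U).submatrix I (leadingColsThen k j) =
      L.submatrix I I * (B⁻¹.submatrix I I * U.submatrix I (leadingColsThen k j)) := by
    rw [mul_assoc, submatrix_castLE_mul_of_isLowerTriangular _ hL,
      submatrix_castLE_mul_of_isLowerTriangular _ hBinv]
  have hBdet : (B⁻¹.submatrix I I).det * (B.submatrix I I).det = 1 := by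
    rw [← det_mul, ← submatrix_castLE_mul_of_isLowerTriangular _ hBinv,
      nonsing_inv_mul _ (isUnit_det_bareissDiag hp),
      submatrix_one _ (Fin.castLE_injective _), det_one]
  have hLdet : (L.submatrix I I).det = ∏ i, p (I i) := by
    rw [det_of_isLowerTriangular (L.submatrix I I) fun a b hab => hL hab]
    exact prod_congr rfl fun i _ => hLp (I i)
  rw [bareissDiag_submatrix_castLE, det_bareissDiag] at hBdet
  rw [hA, det_mul, det_mul, hLdet, det_submatrix_castLE_leadingColsThen hU]
  simp only [hUp, Fin.castLE_castSucc] at hBdet ⊢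
  linear_combination U k j * hBdet

theorem dvd_row_of_map_eq_mul_inv_bareissDiag_mul {D K : Type*} [CommRing D] [Field K]
    [Algebra D K] [IsFractionRing D K] {n : ℕ} {A L U : Matrix (Fin n) (Fin n) D}
    {p : Fin n → D} (hL : L.IsLowerTriangular) (hU : U.IsUpperTriangular)
    (hLp : ∀ i, L i i = p i) (hUp : ∀ i, U i i = p i) (hp : ∀ i, p i ≠ 0)
    (hA : A.map (algebraMap D K) = L.map (algebraMap D K) *
      (bareissDiag fun i => algebraMap D K (p i))⁻¹ * U.map (algebraMap D K))
    (k : Fin n) {d : D}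
    (hd : ∀ I J : Fin ((k : ℕ) + 1) → Fin n, StrictMono I → StrictMono J →
      d ∣ (A.submatrix I J).det) (j : Fin n) :
    d ∣ U k j := by
  rcases lt_or_ge j k with hjk | hkj
  · rw [hU hjk]
    exact dvd_zero d
  have hminor : (A.submatrix (Fin.castLE k.isLt) (leadingColsThen k j)).det = U k j := by
    apply IsFractionRing.injective D K
    rw [RingHom.map_det, RingHom.mapMatrix_apply, ← submatrix_map, hA]
    refine det_submatrix_mul_inv_bareissDiag_mul (hL.map _) (hU.map _) (fun i => ?_)
      (fun i => ?_) (fun i => ?_) k j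
    · simp [hLp]
    · simp [hUp]
    · exact (map_ne_zero_iff _ (IsFractionRing.injective D K)).mpr (hp i) |>.isUnit
  rw [← hminor]
  exact hd _ _ (Fin.strictMono_castLE _) (strictMono_leadingColsThen hkj)

theorem stmt4_general {D K : Type*} [CommRing D] [Field K]
    [Algebra D K] [IsFractionRing D K] {n : ℕ} (A L U : Matrix (Fin n) (Fin n) D)
    (hL : ∀ i j : Fin n, (i : ℕ) < (j : ℕ) → L i j = 0)
    (hU : ∀ i j : Fin n, (j : ℕ) < (i : ℕ) → U i j = 0)
    (hdiag : ∀ i : Fin n, U i i = L i i)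
    (hp : ∀ i : Fin n, L i i ≠ 0)
    (hA : A.map (algebraMap D K) =
      L.map (algebraMap D K) *
        ((bareissDiag fun i : Fin n => L i i).map (algebraMap D K))⁻¹ *
        U.map (algebraMap D K))
    (k : Fin n) (d : D)
    (hd1 : ∀ I J : Fin ((k : ℕ) + 1) → Fin n, StrictMono I → StrictMono J →
      d ∣ (A.submatrix I J).det) :
    (∀ j : Fin n, d ∣ U k j) ∧ (∀ i : Fin n, d ∣ L i k) := by
  have hL' : L.IsLowerTriangular := fun i j hij => hL i j hij
  have hU' : U.IsUpperTriangular := fun i j hij => hU i j hij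
  rw [bareissDiag_map] at hA
  refine ⟨dvd_row_of_map_eq_mul_inv_bareissDiag_mul hL' hU' (fun _ => rfl) hdiag hp hA k hd1,
    fun i => ?_⟩
  have hAT : Aᵀ.map (algebraMap D K) = Uᵀ.map (algebraMap D K) *
      (bareissDiag fun i => algebraMap D K (L i i))⁻¹ * Lᵀ.map (algebraMap D K) := by
    rw [transpose_map, hA, transpose_mul_inv_bareissDiag_mul, ← transpose_map, ← transpose_map]
  have hd1T : ∀ I J : Fin ((k : ℕ) + 1) → Fin n, StrictMono I → StrictMono J →
      d ∣ (Aᵀ.submatrix I J).det := fun I J hI hJ => by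
    rw [← transpose_submatrix, det_transpose]
    exact hd1 J I hJ hI
  exact dvd_row_of_map_eq_mul_inv_bareissDiag_mul hU'.transpose hL'.transpose hdiag
    (fun _ => rfl) hp hAT k hd1T i

/-- (Theorem 6 of the paper.)  Let `D` be a GCD domain with fraction
field `K` and let `A = L · D_g⁻¹ · U` be a permutation-free `L D⁻¹ U` decomposition.
If `d` is a gcd of all `(k+1) × (k+1)` minors of `A` (i.e. the `(k+1)`-st determinantal
divisor, 0-indexed `k`), then `d` divides every entry of the `k`-th row of `U` and
every entry of the `k`-th column of `L`. -/
theorem stmt4 {D K : Type*} [CommRing D] [IsDomain D] [GCDMonoid D] [Field K]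
    [Algebra D K] [IsFractionRing D K] {n : ℕ} (A L U : Matrix (Fin n) (Fin n) D)
    (hL : ∀ i j : Fin n, (i : ℕ) < (j : ℕ) → L i j = 0)
    (hU : ∀ i j : Fin n, (j : ℕ) < (i : ℕ) → U i j = 0)
    (hdiag : ∀ i : Fin n, U i i = L i i)
    (hp : ∀ i : Fin n, L i i ≠ 0)
    (hA : A.map (algebraMap D K) =
      L.map (algebraMap D K) *
        ((bareissDiag fun i : Fin n => L i i).map (algebraMap D K))⁻¹ *
        U.map (algebraMap D K))
    (k : Fin n) (d : D)
    (hd1 : ∀ I J : Fin ((k : ℕ) + 1) → Fin n, StrictMono I → StrictMono J →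
      d ∣ (A.submatrix I J).det)
    (hd2 : ∀ c : D, (∀ I J : Fin ((k : ℕ) + 1) → Fin n, StrictMono I → StrictMono J →
      c ∣ (A.submatrix I J).det) → c ∣ d) :
    (∀ j : Fin n, d ∣ U k j) ∧ (∀ i : Fin n, d ∣ L i k) :=
  stmt4_general A L U hL hU hdiag hp hA k d hd1
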